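/- Fix for each n a perfect matching m*_n of the complete graph K_{2n}, and let D(n) be the number of perfect matchings m of K_{2n} with m ∩ m*_n = ∅. Then D(n)/(2n−1)!! converges to e^{−1/2} as n → ∞. -/

import Mathlib

/-- `(2k-1)!! = 1 * 3 * 5 * ... * (2k-1)`, with `(-1)!! = 1`. -/
def oddFactorial : ℕ → ℕ
  | 0 => 1
  | k + 1 => (2 * k + 1) * oddFactorial k

/-- A perfect matching of the complete graph on vertex set `{0, ..., 2n-1}`. -/
def IsPM (n : ℕ) (m : Finset (Finset ℕ)) : Prop :=
  (∀ e ∈ m, e.card = 2 ∧ e ⊆ Finset.range (2 * n)) ∧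
  ∀ v ∈ Finset.range (2 * n), ∃! e, e ∈ m ∧ v ∈ e

/-!
By inclusion–exclusion over the edges of `m*_n`, `D(n) = ∑ₖ (-1)ᵏ C(n, k) (2n - 2k - 1)!!`,
because the perfect matchings containing `k` fixed disjoint edges are the perfect matchings of the
remaining `2n - 2k` vertices. After division by `(2n - 1)!!` the `k`-th term is `(-1)ᵏ / k!` times
`n (n - 1) ⋯ (n - k + 1) (2n - 2k - 1)!! / (2n - 1)!!`, a ratio that lies in `[0, 1]` and tends
to `2⁻ᵏ`, so by Tannery's theorem the sum tends to `∑ₖ (-1/2)ᵏ / k! = e^{-1/2}`.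
-/

open Finset Filter Topology
open scoped Nat

theorem oddFactorial_succ (k : ℕ) : oddFactorial (k + 1) = (2 * k + 1) * oddFactorial k := rfl

theorem oddFactorial_pos (k : ℕ) : 0 < oddFactorial k := by
  induction k with
  | zero => exact Nat.one_pos
  | succ k ih => rw [oddFactorial_succ]; positivity

section Matchings

variable {α : Type*}

def IsMatchingOn (V : Finset α) (S : Finset (Finset α)) : Prop :=
  (∀ e ∈ S, #e = 2 ∧ e ⊆ V) ∧ (S : Set (Finset α)).PairwiseDisjoint id

def IsPerfectMatchingOn (V : Finset α) (M : Finset (Finset α)) : Prop :=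
  (∀ e ∈ M, #e = 2 ∧ e ⊆ V) ∧ ∀ v ∈ V, ∃! e, e ∈ M ∧ v ∈ e

open Classical in
noncomputable def perfectMatchings (V : Finset α) : Finset (Finset (Finset α)) :=
  {M ∈ V.powerset.powerset | IsPerfectMatchingOn V M}

variable {V : Finset α} {M N S : Finset (Finset α)}

theorem mem_perfectMatchings : M ∈ perfectMatchings V ↔ IsPerfectMatchingOn V M := by
  classical
  simp only [perfectMatchings, mem_filter, mem_powerset, and_iff_right_iff_imp]
  exact fun h e he => mem_powerset.2 (h.1 e he).2

theorem IsMatchingOn.mono {T : Finset (Finset α)} (hT : IsMatchingOn V T) (hST : S ⊆ T) :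
    IsMatchingOn V S :=
  ⟨fun e he => hT.1 e (hST he), hT.2.subset (coe_subset.2 hST)⟩

theorem IsMatchingOn.biUnion_subset [DecidableEq α] (hS : IsMatchingOn V S) :
    S.biUnion id ⊆ V :=
  Finset.biUnion_subset.2 fun e he => (hS.1 e he).2

theorem IsMatchingOn.card_biUnion [DecidableEq α] (hS : IsMatchingOn V S) :
    #(S.biUnion id) = 2 * #S := by
  rw [Finset.card_biUnion hS.2, mul_comm]
  exact sum_const_nat fun e he => (hS.1 e he).1

theorem isMatchingOn_singleton_pair [DecidableEq α] {v w : α} (hv : v ∈ V) (hw : w ∈ V)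
    (hvw : v ≠ w) :
    IsMatchingOn V {{v, w}} := by
  refine ⟨fun e he => ?_, by simp⟩
  rw [mem_singleton.1 he]
  exact ⟨card_pair hvw, insert_subset hv (singleton_subset_iff.2 hw)⟩

namespace IsPerfectMatchingOn

theorem eq_of_mem_of_mem (hM : IsPerfectMatchingOn V M) {e f : Finset α} {v : α}
    (he : e ∈ M) (hf : f ∈ M) (hve : v ∈ e) (hvf : v ∈ f) : e = f :=
  (hM.2 v ((hM.1 e he).2 hve)).unique ⟨he, hve⟩ ⟨hf, hvf⟩

theorem isMatchingOn (hM : IsPerfectMatchingOn V M) : IsMatchingOn V M :=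
  ⟨hM.1, fun _ he _ hf hef => disjoint_left.2 fun _ hve hvf =>
    hef (hM.eq_of_mem_of_mem he hf hve hvf)⟩

theorem biUnion_eq [DecidableEq α] (hM : IsPerfectMatchingOn V M) : M.biUnion id = V :=
  hM.isMatchingOn.biUnion_subset.antisymm fun v hv =>
    let ⟨e, ⟨he, hve⟩, _⟩ := hM.2 v hv
    mem_biUnion.2 ⟨e, he, hve⟩

theorem card_eq (hM : IsPerfectMatchingOn V M) : #V = 2 * #M := by
  classical
  rw [← hM.biUnion_eq, hM.isMatchingOn.card_biUnion]

theorem sdiff [DecidableEq α] (hM : IsPerfectMatchingOn V M) (hS : S ⊆ M) :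
    IsPerfectMatchingOn (V \ S.biUnion id) (M \ S) := by
  refine ⟨fun e he => ?_, fun v hv => ?_⟩
  · obtain ⟨heM, heS⟩ := mem_sdiff.1 he
    refine ⟨(hM.1 e heM).1, fun v hve => mem_sdiff.2 ⟨(hM.1 e heM).2 hve, fun hvS => ?_⟩⟩
    obtain ⟨f, hf, hvf⟩ := mem_biUnion.1 hvS
    exact heS (hM.eq_of_mem_of_mem heM (hS hf) hve hvf ▸ hf)
  · obtain ⟨hvV, hvS⟩ := mem_sdiff.1 hv
    obtain ⟨e, ⟨he, hve⟩, huniq⟩ := hM.2 v hvV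
    have heS : e ∉ S := fun heS => hvS (mem_biUnion.2 ⟨e, heS, hve⟩)
    exact ⟨e, ⟨mem_sdiff.2 ⟨he, heS⟩, hve⟩, fun f ⟨hf, hvf⟩ => huniq f ⟨(mem_sdiff.1 hf).1, hvf⟩⟩

theorem union [DecidableEq α] (hS : IsMatchingOn V S)
    (hN : IsPerfectMatchingOn (V \ S.biUnion id) N) : IsPerfectMatchingOn V (N ∪ S) := by
  refine ⟨fun e he => ?_, fun v hv => ?_⟩
  · rcases mem_union.1 he with he | he
    · exact ⟨(hN.1 e he).1, ((hN.1 e he).2).trans sdiff_subset⟩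
    · exact hS.1 e he
  by_cases hvS : v ∈ S.biUnion id
  · obtain ⟨f, hf, hvf⟩ := mem_biUnion.1 hvS
    refine ⟨f, ⟨mem_union_right _ hf, hvf⟩, fun e ⟨he, hve⟩ => ?_⟩
    rcases mem_union.1 he with he | he
    · exact absurd hvS (mem_sdiff.1 ((hN.1 e he).2 hve)).2
    · by_contra hef
      exact disjoint_left.1 (hS.2 he hf hef) hve hvf
  · obtain ⟨e, ⟨he, hve⟩, huniq⟩ := hN.2 v (mem_sdiff.2 ⟨hv, hvS⟩)
    refine ⟨e, ⟨mem_union_left _ he, hve⟩, fun f ⟨hf, hvf⟩ => ?_⟩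
    rcases mem_union.1 hf with hf | hf
    · exact huniq f ⟨hf, hvf⟩
    · exact absurd (mem_biUnion.2 ⟨f, hf, hvf⟩) hvS

theorem disjoint_of_sdiff_biUnion [DecidableEq α]
    (hN : IsPerfectMatchingOn (V \ S.biUnion id) N) : Disjoint N S := by
  refine disjoint_left.2 fun e heN heS => ?_
  obtain ⟨v, hve⟩ := card_pos.1 ((hN.1 e heN).1 ▸ two_pos)
  exact (mem_sdiff.1 ((hN.1 e heN).2 hve)).2 (mem_biUnion.2 ⟨e, heS, hve⟩)

end IsPerfectMatchingOn

theorem card_filter_superset_perfectMatchings [DecidableEq α] (hS : IsMatchingOn V S) :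
    #{M ∈ perfectMatchings V | S ⊆ M} = #(perfectMatchings (V \ S.biUnion id)) := by
  refine card_bij (fun M _ => M \ S) (fun M hM => ?_) (fun M hM M' hM' h => ?_) (fun N hN => ?_)
  · obtain ⟨hM, hSM⟩ := mem_filter.1 hM
    exact mem_perfectMatchings.2 ((mem_perfectMatchings.1 hM).sdiff hSM)
  · rw [← sdiff_union_of_subset (mem_filter.1 hM).2, ← sdiff_union_of_subset (mem_filter.1 hM').2,
      h]
  · have hN := mem_perfectMatchings.1 hN
    refine ⟨N ∪ S, mem_filter.2 ⟨mem_perfectMatchings.2 (hN.union hS), subset_union_right⟩, ?_⟩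
    rw [union_sdiff_right, sdiff_eq_self_of_disjoint hN.disjoint_of_sdiff_biUnion]

theorem perfectMatchings_empty [DecidableEq α] : perfectMatchings (∅ : Finset α) = {∅} := by
  refine eq_singleton_iff_unique_mem.2 ⟨mem_perfectMatchings.2 ⟨by simp, by simp⟩, fun M hM => ?_⟩
  have := (mem_perfectMatchings.1 hM).card_eq
  rw [card_empty] at this
  exact card_eq_zero.1 (by omega)

theorem exists_eq_pair_of_card_eq_two [DecidableEq α] {e : Finset α} {v : α} (he : #e = 2)
    (hv : v ∈ e) : ∃ w ∈ e, w ≠ v ∧ e = {v, w} := by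
  obtain ⟨w, hw⟩ := card_eq_one.1 (by rw [card_erase_of_mem hv, he] : #(e.erase v) = 1)
  have hwe : w ∈ e.erase v := hw ▸ mem_singleton_self w
  exact ⟨w, mem_of_mem_erase hwe, ne_of_mem_erase hwe, by rw [← insert_erase hv, hw]⟩

theorem perfectMatchings_eq_biUnion [DecidableEq α] {v : α} (hv : v ∈ V) :
    perfectMatchings V = (V.erase v).biUnion fun w => {M ∈ perfectMatchings V | {{v, w}} ⊆ M} := by
  refine (Finset.biUnion_subset.2 fun _ _ => filter_subset _ _).antisymm' fun M hM => ?_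
  obtain ⟨e, ⟨he, hve⟩, -⟩ := (mem_perfectMatchings.1 hM).2 v hv
  obtain ⟨w, hwe, hwv, rfl⟩ :=
    exists_eq_pair_of_card_eq_two ((mem_perfectMatchings.1 hM).1 _ he).1 hve
  exact mem_biUnion.2 ⟨w, mem_erase.2 ⟨hwv, ((mem_perfectMatchings.1 hM).1 _ he).2 hwe⟩,
    mem_filter.2 ⟨hM, singleton_subset_iff.2 he⟩⟩

theorem card_perfectMatchings [DecidableEq α] {n : ℕ} (hV : #V = 2 * n) :
    #(perfectMatchings V) = oddFactorial n := by
  induction n generalizing V with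
  | zero => rw [card_eq_zero.1 hV, perfectMatchings_empty, card_singleton]; rfl
  | succ n ih =>
    obtain ⟨v, hv⟩ := card_pos.1 (by omega : 0 < #V)
    have hfiber : ∀ w ∈ V.erase v, #{M ∈ perfectMatchings V | {{v, w}} ⊆ M} = oddFactorial n := by
      intro w hw
      obtain ⟨hwv, hwV⟩ := mem_erase.1 hw
      have hS := isMatchingOn_singleton_pair hv hwV hwv.symm
      rw [card_filter_superset_perfectMatchings hS, singleton_biUnion, id]
      refine ih ?_
      rw [card_sdiff_of_subset (hS.1 _ (mem_singleton_self _)).2, card_pair hwv.symm, hV]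
      omega
    have hdisj : (V.erase v : Set α).PairwiseDisjoint
        fun w => {M ∈ perfectMatchings V | {{v, w}} ⊆ M} := by
      refine fun w hw w' _ hww' => disjoint_left.2 fun M hM hM' => hww' ?_
      have hpair := (mem_perfectMatchings.1 (mem_filter.1 hM).1).eq_of_mem_of_mem
        (singleton_subset_iff.1 (mem_filter.1 hM).2) (singleton_subset_iff.1 (mem_filter.1 hM').2)
        (mem_insert_self v _) (mem_insert_self v _)
      have hw' : w ∈ ({v, w'} : Finset α) := hpair ▸ mem_insert_of_mem (mem_singleton_self w)
      simpa [ne_of_mem_erase hw] using hw'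
    rw [perfectMatchings_eq_biUnion hv, card_biUnion hdisj, sum_const_nat hfiber,
      card_erase_of_mem hv, hV, oddFactorial_succ]
    congr 1

theorem card_filter_superset_perfectMatchings_eq [DecidableEq α] {n : ℕ} (hV : #V = 2 * n)
    (hS : IsMatchingOn V S) : #{M ∈ perfectMatchings V | S ⊆ M} = oddFactorial (n - #S) := by
  rw [card_filter_superset_perfectMatchings hS]
  refine card_perfectMatchings ?_
  have := card_le_card hS.biUnion_subset
  rw [card_sdiff_of_subset hS.biUnion_subset, hS.card_biUnion] at *
  omega

theorem card_filter_disjoint_perfectMatchings [DecidableEq α] {n : ℕ} (hV : #V = 2 * n)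
    {A : Finset (Finset α)} (hA : IsPerfectMatchingOn V A) :
    (#{M ∈ perfectMatchings V | Disjoint M A} : ℤ) =
      ∑ k ∈ range (n + 1), (-1 : ℤ) ^ k * n.choose k * oddFactorial (n - k) := by
  have hAcard : #A = n := by have := hA.card_eq; omega
  have hindicator : ∀ M : Finset (Finset α), (if Disjoint M A then 1 else 0 : ℤ) =
      ∑ S ∈ A.powerset, if S ⊆ M then (-1 : ℤ) ^ #S else 0 := by
    intro M
    have hpowerset : {S ∈ A.powerset | S ⊆ M} = (M ∩ A).powerset := by
      ext S
      simp only [mem_filter, mem_powerset, subset_inter_iff, and_comm]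
    rw [← sum_filter, hpowerset, sum_powerset_neg_one_pow_card]
    exact if_congr disjoint_iff_inter_eq_empty rfl rfl
  calc (#{M ∈ perfectMatchings V | Disjoint M A} : ℤ)
      = ∑ S ∈ A.powerset, ∑ M ∈ perfectMatchings V, if S ⊆ M then (-1 : ℤ) ^ #S else 0 := by
        rw [natCast_card_filter, sum_comm]
        exact sum_congr rfl fun M _ => hindicator M
    _ = ∑ S ∈ A.powerset, (-1 : ℤ) ^ #S * oddFactorial (n - #S) := by
        refine sum_congr rfl fun S hS => ?_
        rw [← sum_filter, sum_const, card_filter_superset_perfectMatchings_eq hV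
          (hA.isMatchingOn.mono (mem_powerset.1 hS)), nsmul_eq_mul, mul_comm]
    _ = ∑ k ∈ range (n + 1), (-1 : ℤ) ^ k * n.choose k * oddFactorial (n - k) := by
        rw [sum_powerset_apply_card (fun k => (-1) ^ k * (oddFactorial (n - k) : ℤ)), hAcard]
        refine sum_congr rfl fun k _ => ?_
        rw [nsmul_eq_mul]
        ring

end Matchings

theorem mul_oddFactorial_sub_one_le (m : ℕ) : m * oddFactorial (m - 1) ≤ oddFactorial m := by
  cases m with
  | zero => exact Nat.zero_le _
  | succ j => rw [oddFactorial_succ, Nat.add_sub_cancel]; gcongr; omega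

theorem descFactorial_mul_oddFactorial_sub_le (n k : ℕ) :
    n.descFactorial k * oddFactorial (n - k) ≤ oddFactorial n := by
  induction k with
  | zero => simp
  | succ k ih =>
    calc n.descFactorial (k + 1) * oddFactorial (n - (k + 1))
        = n.descFactorial k * ((n - k) * oddFactorial (n - k - 1)) := by
          rw [Nat.descFactorial_succ, Nat.sub_succ']; ring
      _ ≤ n.descFactorial k * oddFactorial (n - k) := by gcongr; exact mul_oddFactorial_sub_one_le _
      _ ≤ oddFactorial n := ih

theorem tendsto_descFactorial_mul_oddFactorial_div (k : ℕ) :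
    Tendsto (fun n : ℕ => (n.descFactorial k * oddFactorial (n - k) : ℝ) / oddFactorial n)
      atTop (𝓝 ((1 / 2) ^ k)) := by
  induction k with
  | zero =>
    refine tendsto_const_nhds.congr fun n => ?_
    rw [Nat.descFactorial_zero, Nat.sub_zero, Nat.cast_one, one_mul, pow_zero, div_self]
    exact_mod_cast (oddFactorial_pos n).ne'
  | succ k ih =>
    rw [← tendsto_add_atTop_iff_nat 1]
    have hstep : ∀ n : ℕ,
        ((n + 1).descFactorial (k + 1) * oddFactorial (n + 1 - (k + 1)) : ℝ) / oddFactorial (n + 1)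
          = (1 + 1 * n) / (1 + 2 * n) *
            ((n.descFactorial k * oddFactorial (n - k) : ℝ) / oddFactorial n) := by
      intro n
      have : (oddFactorial n : ℝ) ≠ 0 := by exact_mod_cast (oddFactorial_pos n).ne'
      rw [Nat.succ_descFactorial_succ, Nat.add_sub_add_right, oddFactorial_succ]
      push_cast
      field_simp
      ring
    simp only [hstep, pow_succ']
    exact (tendsto_add_mul_div_add_mul_atTop_nhds 1 1 1 two_ne_zero).mul ih

theorem tendsto_tsum_pow_div_factorial_mul {r : ℕ → ℕ → ℝ} {x : ℝ} (c : ℝ)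
    (hr : ∀ k, Tendsto (fun n => r n k) atTop (𝓝 (x ^ k))) (hr_le : ∀ n k, |r n k| ≤ 1) :
    Tendsto (fun n => ∑' k, c ^ k / k ! * r n k) atTop (𝓝 (Real.exp (c * x))) := by
  rw [Real.exp_eq_exp_ℝ, ← (NormedSpace.expSeries_div_hasSum_exp (c * x)).tsum_eq]
  refine tendsto_tsum_of_dominated_convergence (Real.summable_pow_div_factorial |c|)
    (fun k => ?_) (Eventually.of_forall fun n k => ?_)
  · rw [mul_pow, mul_div_right_comm]
    exact (hr k).const_mul _
  · rw [norm_mul, norm_div, norm_pow, Real.norm_eq_abs, Real.norm_eq_abs, Nat.abs_cast]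
    exact mul_le_of_le_one_right (by positivity) (hr_le n k)

theorem abs_descFactorial_mul_oddFactorial_div_le_one (n k : ℕ) :
    |(n.descFactorial k * oddFactorial (n - k) : ℝ) / oddFactorial n| ≤ 1 := by
  have hpos : (0 : ℝ) < oddFactorial n := by exact_mod_cast oddFactorial_pos n
  rw [abs_of_nonneg (by positivity), div_le_one hpos]
  exact_mod_cast descFactorial_mul_oddFactorial_sub_le n k

theorem sum_choose_mul_oddFactorial_div_eq_tsum (n : ℕ) :
    (∑ k ∈ range (n + 1), (-1 : ℝ) ^ k * n.choose k * oddFactorial (n - k)) / oddFactorial n =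
      ∑' k, (-1 : ℝ) ^ k / k ! * (n.descFactorial k * oddFactorial (n - k) / oddFactorial n) := by
  rw [tsum_eq_sum (s := range (n + 1)) fun k hk => ?_, sum_div]
  · refine sum_congr rfl fun k _ => ?_
    rw [Nat.descFactorial_eq_factorial_mul_choose]
    push_cast
    field_simp
  · rw [Nat.descFactorial_eq_zero_iff_lt.2 (by simpa using hk)]
    simp

theorem ncard_setOf_isPM_inter_eq_empty (n : ℕ) (A : Finset (Finset ℕ)) :
    ({m | IsPM n m ∧ m ∩ A = ∅} : Set (Finset (Finset ℕ))).ncard =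
      #{M ∈ perfectMatchings (range (2 * n)) | Disjoint M A} := by
  rw [← Set.ncard_coe_finset]
  congr 1
  ext M
  simp [mem_perfectMatchings, IsPM, IsPerfectMatchingOn, disjoint_iff_inter_eq_empty]

theorem derangement_ratio_tendsto (mstar : ℕ → Finset (Finset ℕ))
    (hmstar : ∀ n, IsPM n (mstar n)) :
    Filter.Tendsto
      (fun n : ℕ =>
        ((({m | IsPM n m ∧ m ∩ mstar n = ∅} : Set (Finset (Finset ℕ))).ncard : ℝ) /
          (oddFactorial n : ℝ)))
      Filter.atTop (nhds (Real.exp (-(1 / 2)))) := by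
  have hratio : ∀ n : ℕ,
      (({m | IsPM n m ∧ m ∩ mstar n = ∅} : Set (Finset (Finset ℕ))).ncard : ℝ) / oddFactorial n =
        ∑' k, (-1 : ℝ) ^ k / k ! * (n.descFactorial k * oddFactorial (n - k) / oddFactorial n) := by
    intro n
    rw [ncard_setOf_isPM_inter_eq_empty, ← sum_choose_mul_oddFactorial_div_eq_tsum,
      ← Int.cast_natCast, card_filter_disjoint_perfectMatchings (card_range _) (hmstar n)]
    push_cast
    rfl
  have hlim := tendsto_tsum_pow_div_factorial_mul (-1) tendsto_descFactorial_mul_oddFactorial_div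
    abs_descFactorial_mul_oddFactorial_div_le_one
  rw [neg_one_mul] at hlim
  simpa only [hratio] using hlim
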